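/- Let 0 < r < 1, let H be a complex Hilbert space, and let T be a bounded linear operator on H. Suppose H₁ and H₂ are closed, mutually orthogonal subspaces of H with H = H₁ ⊕ H₂, both invariant under T and under T*, such that the restriction of T to H₁ is a unitary operator on H₁ and such that ‖Th‖ = r‖h‖ for all h ∈ H₂ and T maps H₂ onto H₂ (i.e. r⁻¹T restricted to H₂ is unitary). Then T is an 𝔸_r-unitary: T is normal and σ(T) ⊆ {z ∈ ℂ : |z| = 1 or |z| = r}. -/

import Mathlib

open ContinuousLinearMap

/-- `T` is an `𝔸_r`-unitary: a normal operator with spectrum in the boundary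
`{z : |z| = 1} ∪ {z : |z| = r}` of the annulus. -/
noncomputable def IsArUnitary {K : Type*} [NormedAddCommGroup K] [InnerProductSpace ℂ K]
    [CompleteSpace K] (r : ℝ) (N : K →L[ℂ] K) : Prop :=
  adjoint N * N = N * adjoint N ∧
  spectrum ℂ N ⊆ {z : ℂ | ‖z‖ = 1 ∨ ‖z‖ = r}

/-! On each summand `T*T` acts as a scalar, and so does `TT*` by surjectivity; hence `T` is
normal and `(T*T - 1)(T*T - r²) = 0`. By the continuous functional calculus,
`(|z|² - 1)(|z|² - r²)` then vanishes on `σ(T)`. -/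

namespace ContinuousLinearMap

variable {𝕜 E : Type*} [RCLike 𝕜] [NormedAddCommGroup E] [InnerProductSpace 𝕜 E]
  [CompleteSpace E] {T : E →L[𝕜] E} {M : Submodule 𝕜 E} {c : ℝ}

/-- `T*T - c²` is symmetric on the reducing subspace `M` and its quadratic form vanishes there. -/
theorem adjoint_apply_apply_eq_of_norm_map_eq (hT : ∀ x ∈ M, T x ∈ M)
    (hT' : ∀ x ∈ M, adjoint T x ∈ M) (hc : ∀ x ∈ M, ‖T x‖ = c * ‖x‖) {x : E} (hx : x ∈ M) :
    adjoint T (T x) = ((c ^ 2 : ℝ) : 𝕜) • x := by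
  set A : E →L[𝕜] E := adjoint T * T - ((c ^ 2 : ℝ) : 𝕜) • 1
  have hA : IsSelfAdjoint A :=
    (IsSelfAdjoint.star_mul_self T).sub (IsSelfAdjoint.smul (RCLike.conj_ofReal _) (.one _))
  have hAM : ∀ x ∈ M, A x ∈ M := fun x hx => M.sub_mem (hT' _ (hT x hx)) (M.smul_mem _ hx)
  have hA_inner : ∀ z : M, inner 𝕜 ((A : E →ₗ[𝕜] E).restrict hAM z) z = 0 := fun z => by
    simp [A, inner_sub_left, adjoint_inner_left, inner_smul_left, hc z z.2,
      RCLike.algebraMap_eq_ofReal, mul_pow]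
  have hA_zero := (hA.isSymmetric.restrict_invariant hAM).inner_map_self_eq_zero.mp hA_inner
  simpa [A, sub_eq_zero] using congr(($hA_zero ⟨x, hx⟩ : E))

theorem apply_adjoint_apply_eq_of_norm_map_eq (hT : ∀ x ∈ M, T x ∈ M)
    (hT' : ∀ x ∈ M, adjoint T x ∈ M) (hc : ∀ x ∈ M, ‖T x‖ = c * ‖x‖)
    (hsurj : ∀ y ∈ M, ∃ x ∈ M, T x = y) {y : E} (hy : y ∈ M) :
    T (adjoint T y) = ((c ^ 2 : ℝ) : 𝕜) • y := by
  obtain ⟨x, hx, rfl⟩ := hsurj y hy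
  rw [adjoint_apply_apply_eq_of_norm_map_eq hT hT' hc hx, map_smul]

end ContinuousLinearMap

theorem IsStarNormal.spectrum_subset_of_star_mul_self_sub_mul_eq_zero {A : Type*} [CStarAlgebra A]
    {a : A} [IsStarNormal a] {s t : ℝ}
    (h : (star a * a - algebraMap ℂ A s) * (star a * a - algebraMap ℂ A t) = 0) :
    spectrum ℂ a ⊆ {z | ‖z‖ ^ 2 = s ∨ ‖z‖ ^ 2 = t} := by
  have hcfc : cfc (fun z : ℂ => (star z * z - s) * (star z * z - t)) a = cfc (0 : ℂ → ℂ) a := by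
    rw [cfc_mul _ _ a, cfc_sub _ _ a, cfc_sub _ _ a, cfc_mul (star ·) _ a,
      cfc_star_id (R := ℂ) (a := a), cfc_id' ℂ a, cfc_const (s : ℂ) a, cfc_const (t : ℂ) a, h,
      cfc_zero]
  intro z hz
  have hz0 := (eqOn_of_cfc_eq_cfc hcfc) hz
  simp only [Complex.star_def, Complex.conj_mul', Pi.zero_apply, mul_eq_zero, sub_eq_zero] at hz0
  exact_mod_cast hz0

theorem stmt8_general {H : Type*} [NormedAddCommGroup H] [InnerProductSpace ℂ H] [CompleteSpace H]
    (r : ℝ) (hr0 : 0 < r) (T : H →L[ℂ] H)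
    (H₁ H₂ : Submodule ℂ H)
    (hsum : H₁ ⊔ H₂ = ⊤)
    (hinv₁ : ∀ h ∈ H₁, T h ∈ H₁) (hinv₁' : ∀ h ∈ H₁, adjoint T h ∈ H₁)
    (hinv₂ : ∀ h ∈ H₂, T h ∈ H₂) (hinv₂' : ∀ h ∈ H₂, adjoint T h ∈ H₂)
    (hiso₁ : ∀ h ∈ H₁, ‖T h‖ = ‖h‖) (hsurj₁ : ∀ h ∈ H₁, ∃ h' ∈ H₁, T h' = h)
    (hiso₂ : ∀ h ∈ H₂, ‖T h‖ = r * ‖h‖) (hsurj₂ : ∀ h ∈ H₂, ∃ h' ∈ H₂, T h' = h) :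
    IsArUnitary r T := by
  have hcod : Codisjoint H₁ H₂ := codisjoint_iff.mpr hsum
  have hiso₁' : ∀ h ∈ H₁, ‖T h‖ = 1 * ‖h‖ := by simpa using hiso₁
  have hS₁ : ∀ x ∈ H₁, adjoint T (T x) = x := fun x hx => by
    simpa using adjoint_apply_apply_eq_of_norm_map_eq hinv₁ hinv₁' hiso₁' hx
  have hS₂ : ∀ x ∈ H₂, adjoint T (T x) = ((r ^ 2 : ℝ) : ℂ) • x := fun x hx =>
    adjoint_apply_apply_eq_of_norm_map_eq hinv₂ hinv₂' hiso₂ hx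
  have hnormal : adjoint T * T = T * adjoint T := by
    refine LinearMap.ext_on_codisjoint hcod (fun x hx => ?_) (fun x hx => ?_)
    · simp [hS₁ x hx, apply_adjoint_apply_eq_of_norm_map_eq hinv₁ hinv₁' hiso₁' hsurj₁ hx]
    · simp [hS₂ x hx, apply_adjoint_apply_eq_of_norm_map_eq hinv₂ hinv₂' hiso₂ hsurj₂ hx]
  have : IsStarNormal T := ⟨hnormal⟩
  have hquad : (star T * T - algebraMap ℂ _ (1 : ℝ)) * (star T * T - algebraMap ℂ _ (r ^ 2 : ℝ))
      = 0 := by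
    refine LinearMap.ext_on_codisjoint hcod (fun x hx => ?_) (fun x hx => ?_)
    · simp [star_eq_adjoint, hS₁ x hx]
    · have hx_ker : (star T * T - algebraMap ℂ _ (r ^ 2 : ℝ)) x = 0 := by
        simp [star_eq_adjoint, hS₂ x hx, Algebra.algebraMap_eq_smul_one]
      rw [mul_apply_eq_comp, hx_ker, map_zero, zero_apply]
  refine ⟨hnormal, fun z hz => ?_⟩
  have hz_sq := IsStarNormal.spectrum_subset_of_star_mul_self_sub_mul_eq_zero hquad hz
  exact hz_sq.imp (pow_eq_one_iff_of_nonneg (norm_nonneg z) two_ne_zero).mp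
    (sq_eq_sq₀ (norm_nonneg z) hr0.le).mp

theorem stmt8 {H : Type*} [NormedAddCommGroup H] [InnerProductSpace ℂ H] [CompleteSpace H]
    (r : ℝ) (hr0 : 0 < r) (hr1 : r < 1) (T : H →L[ℂ] H)
    (H₁ H₂ : Submodule ℂ H)
    (hC₁ : IsClosed (H₁ : Set H)) (hC₂ : IsClosed (H₂ : Set H))
    (horth : ∀ h₁ ∈ H₁, ∀ h₂ ∈ H₂, (inner ℂ h₁ h₂ : ℂ) = 0)
    (hsum : H₁ ⊔ H₂ = ⊤)
    (hinv₁ : ∀ h ∈ H₁, T h ∈ H₁) (hinv₁' : ∀ h ∈ H₁, adjoint T h ∈ H₁)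
    (hinv₂ : ∀ h ∈ H₂, T h ∈ H₂) (hinv₂' : ∀ h ∈ H₂, adjoint T h ∈ H₂)
    (hiso₁ : ∀ h ∈ H₁, ‖T h‖ = ‖h‖) (hsurj₁ : ∀ h ∈ H₁, ∃ h' ∈ H₁, T h' = h)
    (hiso₂ : ∀ h ∈ H₂, ‖T h‖ = r * ‖h‖) (hsurj₂ : ∀ h ∈ H₂, ∃ h' ∈ H₂, T h' = h) :
    IsArUnitary r T :=
  stmt8_general r hr0 T H₁ H₂ hsum hinv₁ hinv₁' hinv₂ hinv₂' hiso₁ hsurj₁ hiso₂ hsurj₂
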